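/- arXiv:2311.10192 — 2 statements merged into one kernel-verified Lean document; each statement's English description precedes it below -/
import Mathlib

section
/- For every n ≥ 0, as r → 0⁺ one has Φ_n″(r) − 1/r² − ln(1/r) [ I₀(γr) v̄_n(r) − (I₁(γr)/r) w̄_n(r) ] − ω_n = O(r²), where ω_n = (ln(2/γ) − C)(γ²/2 − γ a_{n,1} + 2 a_{n,2}) − γ²/4 + γ a_{n,1} − 3 a_{n,2} + 2 a_{n,3}/γ (with a_{n,k} = 0 for k > n), and v̄_n, w̄_n are the polynomials v̄_n(r) = 2 Σ_{k=1}^{⌊n/2⌋} k(2k−1) a_{n,2k} r^{2k−2} − γ Σ_{k=0}^{⌊(n−1)/2⌋} (2k+1) a_{n,2k+1} r^{2k} − γ w̃_n(r) and w̄_n(r) = 4 Σ_{k=1}^{⌊(n−1)/2⌋} k² a_{n,2k+1} r^{2k} − 2γ Σ_{k=1}^{⌊n/2⌋} k a_{n,2k} r^{2k} − γ r ṽ_n(r) − w̃_n(r), with ṽ_n(r) = 2 Σ_{k=1}^{⌊n/2⌋} k a_{n,2k} r^{2k−1} − γ w_n(r) and w̃_n(r) = 2 Σ_{k=1}^{⌊(n−1)/2⌋}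 k a_{n,2k+1} r^{2k} − γ v_n(r). -/
/-!
With `L(r) = log r + log (γ/2) + C`, the series defining `K₀` and `K₁` give `Φ_n = -L f + h` on
`r > 0`, where `f(r) = I₀(γr) v_n(r) - I₁(γr) w_n(r) = F(r²)`, `h(r) = H(r²)` and `F`, `H` are
entire. Hence `Φ_n'' = f/r² - 2f'/r - L f'' + h''`. Because `I₀' = I₁` and
`I₁'(z) = I₀(z) - I₁(z)/z`, differentiating `I₀(γr) p - I₁(γr) q` turns `(v_n, w_n)` into
`(ṽ_n, w̃_n)` and these into `(v̄_n, w̄_n)`, so `f'' = I₀(γr) v̄_n - (I₁(γr)/r) w̄_n` and the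
`ln(1/r)` term cancels `-(log r) f''` exactly. Since `F(0) = a_{n,0} = 1`, what is left is `Θ(r²)`
for a smooth `Θ` built from `(F - 1)/x`, `F'`, `F''`, `H'`, `H''`, and `Θ(0) = ω_n`.
-/

open Real Filter

/-- `I₀(z) = Σ_{n=0}^∞ (z/2)^{2n}/(n!)²`. -/
noncomputable def besselI0 (z : ℝ) : ℝ :=
  ∑' n : ℕ, (z / 2) ^ (2 * n) / (Nat.factorial n : ℝ) ^ 2

/-- `I₁(z) = Σ_{n=0}^∞ (z/2)^{2n+1}/(n!(n+1)!)`. -/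
noncomputable def besselI1 (z : ℝ) : ℝ :=
  ∑' n : ℕ, (z / 2) ^ (2 * n + 1) / ((Nat.factorial n : ℝ) * (Nat.factorial (n + 1) : ℝ))

/-- `ψ(0) = 0`, `ψ(n) = Σ_{m=1}^n 1/m`. -/
noncomputable def psiHarm (n : ℕ) : ℝ := ∑ m ∈ Finset.Icc 1 n, (1 / m : ℝ)

/-- `K₀(z) = −(ln(z/2) + C) I₀(z) + Σ_{n=1}^∞ (ψ(n)/(n!)²) (z/2)^{2n}`. -/
noncomputable def besselK0 (z : ℝ) : ℝ :=
  -(Real.log (z / 2) + Real.eulerMascheroniConstant) * besselI0 z +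
    ∑' n : ℕ, psiHarm (n + 1) / (Nat.factorial (n + 1) : ℝ) ^ 2 * (z / 2) ^ (2 * (n + 1))

/-- `K₁(z) = 1/z + (ln(z/2) + C) I₁(z) − (1/2) Σ_{n=0}^∞ ((ψ(n+1)+ψ(n))/(n!(n+1)!)) (z/2)^{2n+1}`. -/
noncomputable def besselK1 (z : ℝ) : ℝ :=
  1 / z + (Real.log (z / 2) + Real.eulerMascheroniConstant) * besselI1 z -
    (1 / 2) * ∑' n : ℕ, (psiHarm (n + 1) + psiHarm n) /
      ((Nat.factorial n : ℝ) * (Nat.factorial (n + 1) : ℝ)) * (z / 2) ^ (2 * n + 1)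

/-- `β_n = κ²(n+1)/c²`. -/
noncomputable def betaC (κ c : ℝ) (n : ℕ) : ℝ := κ ^ 2 * (n + 1) / c ^ 2

/-- `γ = κ/c`. -/
noncomputable def gammaC (κ c : ℝ) : ℝ := κ / c

/-- `v_n(r) = Σ_{k=0}^{⌊n/2⌋} a_{n,2k} r^{2k}`. -/
noncomputable def vPoly (a : ℕ → ℕ → ℝ) (n : ℕ) (r : ℝ) : ℝ :=
  ∑ k ∈ Finset.range (n / 2 + 1), a n (2 * k) * r ^ (2 * k)

/-- `w_n(r) = Σ_{k=0}^{⌊(n−1)/2⌋} a_{n,2k+1} r^{2k+1}` (so `w₀ = 0` since `a_{0,1} = 0`). -/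
noncomputable def wPoly (a : ℕ → ℕ → ℝ) (n : ℕ) (r : ℝ) : ℝ :=
  ∑ k ∈ Finset.range ((n - 1) / 2 + 1), a n (2 * k + 1) * r ^ (2 * k + 1)

/-- `Φ_n(r) = K₀(γr) v_n(r) + K₁(γr) w_n(r)`. -/
noncomputable def PhiFund (γ : ℝ) (a : ℕ → ℕ → ℝ) (n : ℕ) (r : ℝ) : ℝ :=
  besselK0 (γ * r) * vPoly a n r + besselK1 (γ * r) * wPoly a n r

/-- `ṽ_n(r) = 2 Σ_{k=1}^{⌊n/2⌋} k a_{n,2k} r^{2k−1} − γ w_n(r)`. -/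
noncomputable def vTilde (γ : ℝ) (a : ℕ → ℕ → ℝ) (n : ℕ) (r : ℝ) : ℝ :=
  2 * ∑ k ∈ Finset.Icc 1 (n / 2), (k : ℝ) * a n (2 * k) * r ^ (2 * k - 1) - γ * wPoly a n r

/-- `w̃_n(r) = 2 Σ_{k=1}^{⌊(n−1)/2⌋} k a_{n,2k+1} r^{2k} − γ v_n(r)`. -/
noncomputable def wTilde (γ : ℝ) (a : ℕ → ℕ → ℝ) (n : ℕ) (r : ℝ) : ℝ :=
  2 * ∑ k ∈ Finset.Icc 1 ((n - 1) / 2), (k : ℝ) * a n (2 * k + 1) * r ^ (2 * k) -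
    γ * vPoly a n r

/-- `v̄_n(r) = 2 Σ_{k=1}^{⌊n/2⌋} k(2k−1) a_{n,2k} r^{2k−2}
  − γ Σ_{k=0}^{⌊(n−1)/2⌋} (2k+1) a_{n,2k+1} r^{2k} − γ w̃_n(r)`. -/
noncomputable def vBar (γ : ℝ) (a : ℕ → ℕ → ℝ) (n : ℕ) (r : ℝ) : ℝ :=
  2 * ∑ k ∈ Finset.Icc 1 (n / 2), (k : ℝ) * (2 * k - 1 : ℝ) * a n (2 * k) * r ^ (2 * k - 2) -
    γ * ∑ k ∈ Finset.range ((n - 1) / 2 + 1), (2 * k + 1 : ℝ) * a n (2 * k + 1) * r ^ (2 * k) -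
    γ * wTilde γ a n r

/-- `w̄_n(r) = 4 Σ_{k=1}^{⌊(n−1)/2⌋} k² a_{n,2k+1} r^{2k}
  − 2γ Σ_{k=1}^{⌊n/2⌋} k a_{n,2k} r^{2k} − γ r ṽ_n(r) − w̃_n(r)`. -/
noncomputable def wBar (γ : ℝ) (a : ℕ → ℕ → ℝ) (n : ℕ) (r : ℝ) : ℝ :=
  4 * ∑ k ∈ Finset.Icc 1 ((n - 1) / 2), (k : ℝ) ^ 2 * a n (2 * k + 1) * r ^ (2 * k) -
    2 * γ * ∑ k ∈ Finset.Icc 1 (n / 2), (k : ℝ) * a n (2 * k) * r ^ (2 * k) -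
    γ * r * vTilde γ a n r - wTilde γ a n r

open Topology
open scoped ContDiff

noncomputable def powSeries (q : ℕ → ℝ) (x : ℝ) : ℝ := ∑' n, q n * x ^ n

def derivCoeff (q : ℕ → ℝ) (n : ℕ) : ℝ := (n + 1) * q (n + 1)

def IsEntire (q : ℕ → ℝ) : Prop := ∀ R : ℝ, 0 ≤ R → Summable fun n => |q n| * R ^ n

namespace IsEntire

variable {q : ℕ → ℝ}

theorem summable (hq : IsEntire q) (x : ℝ) : Summable fun n => q n * x ^ n :=
  .of_norm_bounded (hq |x| (abs_nonneg x)) fun n => by simp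

theorem of_abs_le_div_factorial {C : ℝ} (h : ∀ n, |q n| ≤ C / n.factorial) : IsEntire q :=
  fun R hR => .of_nonneg_of_le (fun n => by positivity)
    (fun n => (mul_le_mul_of_nonneg_right (h n) (by positivity)).trans_eq (by ring))
    ((Real.summable_pow_div_factorial R).mul_left C)

theorem of_forall_lt_eq_zero {N : ℕ} (h : ∀ k, N < k → q k = 0) : IsEntire q :=
  fun R _ => summable_of_ne_finset_zero (s := Finset.range (N + 1)) fun k hk => by
    rw [h k (by simpa using hk), abs_zero, zero_mul]

protected theorem derivCoeff (hq : IsEntire q) : IsEntire (derivCoeff q) := by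
  intro R hR
  set S := 2 * (R + 1)
  have hS : 1 ≤ S := by linarith
  refine .of_nonneg_of_le (fun n => by positivity) (fun n => ?_)
    ((summable_nat_add_iff 1).mpr (hq S (by linarith)))
  have hn : ((n : ℝ) + 1) ≤ 2 ^ n := by exact_mod_cast Nat.lt_two_pow_self
  calc |derivCoeff q n| * R ^ n = |q (n + 1)| * ((n + 1) * R ^ n) := by
        rw [derivCoeff, abs_mul, abs_of_nonneg (by positivity : (0 : ℝ) ≤ n + 1)]; ring
    _ ≤ |q (n + 1)| * S ^ (n + 1) := by
        gcongr
        calc ((n : ℝ) + 1) * R ^ n ≤ 2 ^ n * (R + 1) ^ n := by gcongr; linarith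
          _ = S ^ n := by rw [mul_pow]
          _ ≤ S ^ (n + 1) := pow_le_pow_right₀ hS n.le_succ

theorem comp_succ (hq : IsEntire q) : IsEntire fun n => q (n + 1) :=
  fun R hR => .of_nonneg_of_le (fun n => by positivity)
    (fun n => by
      rw [derivCoeff, abs_mul, abs_of_nonneg (by positivity : (0 : ℝ) ≤ n + 1)]
      have : |q (n + 1)| ≤ (n + 1) * |q (n + 1)| := le_mul_of_one_le_left (abs_nonneg _) (by simp)
      gcongr)
    (hq.derivCoeff R hR)

end IsEntire

section PowSeries

variable {q : ℕ → ℝ}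

@[simp]
theorem powSeries_zero (q : ℕ → ℝ) : powSeries q 0 = q 0 := by
  rw [powSeries, tsum_eq_single 0 fun n hn => by simp [hn]]
  simp

theorem powSeries_eq_add_mul (hq : IsEntire q) (x : ℝ) :
    powSeries q x = q 0 + x * powSeries (fun n => q (n + 1)) x := by
  rw [powSeries, (hq.summable x).tsum_eq_zero_add, powSeries, ← tsum_mul_left]
  simp only [pow_succ]
  congr 1
  · simp
  · exact tsum_congr fun n => by ring

theorem hasDerivAt_powSeries (hq : IsEntire q) (x : ℝ) :
    HasDerivAt (powSeries q) (powSeries (derivCoeff q) x) x := by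
  set M := |x| + 1
  have hM : 0 < M := by positivity
  have hx : x ∈ Metric.ball (0 : ℝ) M := by simp [M]
  have htail : HasDerivAt (fun y => ∑' n, q (n + 1) * y ^ (n + 1))
      (powSeries (derivCoeff q) x) x := by
    refine hasDerivAt_tsum_of_isPreconnected (g' := fun n y => derivCoeff q n * y ^ n)
      (hq.derivCoeff M hM.le) Metric.isOpen_ball
      (convex_ball 0 M).isPreconnected (fun n y _ => ?_) (fun n y hy => ?_)
      (Metric.mem_ball_self hM) ?_ hx
    · exact ((hasDerivAt_pow (n + 1) y).const_mul (q (n + 1))).congr_deriv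
        (by simp only [derivCoeff, Nat.add_sub_cancel]; push_cast; ring)
    · rw [norm_mul, norm_pow, Real.norm_eq_abs, Real.norm_eq_abs]
      have : |y| ≤ M := by simpa using (Metric.mem_ball.mp hy).le
      gcongr
    · simp
  have hsplit : powSeries q = fun y => q 0 + ∑' n, q (n + 1) * y ^ (n + 1) := by
    funext y
    rw [powSeries, (hq.summable y).tsum_eq_zero_add]
    simp
  rw [hsplit]
  exact htail.const_add _

theorem deriv_powSeries (hq : IsEntire q) : deriv (powSeries q) = powSeries (derivCoeff q) :=
  funext fun x => (hasDerivAt_powSeries hq x).deriv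

theorem contDiff_powSeries (hq : IsEntire q) : ContDiff ℝ ∞ (powSeries q) := by
  suffices h : ∀ k : ℕ, ∀ q, IsEntire q → ContDiff ℝ k (powSeries q) from
    contDiff_infty.mpr fun k => h k q hq
  intro k
  induction k with
  | zero =>
    intro q hq
    rw [Nat.cast_zero, contDiff_zero]
    exact continuous_iff_continuousAt.mpr fun x => (hasDerivAt_powSeries hq x).continuousAt
  | succ k ih =>
    intro q hq
    rw [Nat.cast_succ, contDiff_succ_iff_deriv]
    exact ⟨fun x => (hasDerivAt_powSeries hq x).differentiableAt, by simp,
      deriv_powSeries hq ▸ ih _ hq.derivCoeff⟩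

theorem hasDerivAt_powSeries_comp_mul (hq : IsEntire q) (c x : ℝ) :
    HasDerivAt (fun y => powSeries q (c * y)) (c * powSeries (derivCoeff q) (c * x)) x :=
  ((hasDerivAt_powSeries hq (c * x)).comp x ((hasDerivAt_id' x).const_mul c)).congr_deriv
    (by ring)

end PowSeries

theorem psiHarm_nonneg (n : ℕ) : 0 ≤ psiHarm n :=
  Finset.sum_nonneg fun _ _ => by positivity

theorem psiHarm_le (n : ℕ) : psiHarm n ≤ n := by
  have h : ∀ m ∈ Finset.Icc 1 n, (1 / m : ℝ) ≤ 1 := fun m hm => by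
    rw [div_le_one₀ (by exact_mod_cast (Finset.mem_Icc.mp hm).1)]
    exact_mod_cast (Finset.mem_Icc.mp hm).1
  simpa [psiHarm] using Finset.sum_le_card_nsmul _ _ _ h

noncomputable def i0Coeff (n : ℕ) : ℝ := 1 / (n.factorial : ℝ) ^ 2

noncomputable def i1Coeff (n : ℕ) : ℝ := 1 / ((n.factorial : ℝ) * (n + 1).factorial)

noncomputable def k0Coeff (n : ℕ) : ℝ := psiHarm n / (n.factorial : ℝ) ^ 2

noncomputable def k1Coeff (n : ℕ) : ℝ :=
  (psiHarm (n + 1) + psiHarm n) / ((n.factorial : ℝ) * (n + 1).factorial)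

theorem isEntire_i0Coeff : IsEntire i0Coeff := by
  refine .of_abs_le_div_factorial (C := 1) fun n => ?_
  have h : (1 : ℝ) ≤ n.factorial := by exact_mod_cast n.factorial_pos
  rw [i0Coeff, abs_of_nonneg (by positivity), sq]
  gcongr
  exact le_mul_of_one_le_left (by positivity) h

theorem isEntire_i1Coeff : IsEntire i1Coeff := by
  refine .of_abs_le_div_factorial (C := 1) fun n => ?_
  have h : (1 : ℝ) ≤ (n + 1).factorial := by exact_mod_cast (n + 1).factorial_pos
  rw [i1Coeff, abs_of_nonneg (by positivity)]
  gcongr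
  exact le_mul_of_one_le_right (by positivity) h

theorem isEntire_k0Coeff : IsEntire k0Coeff := by
  refine .of_abs_le_div_factorial (C := 1) fun n => ?_
  have h : psiHarm n ≤ n.factorial :=
    (psiHarm_le n).trans (by exact_mod_cast n.self_le_factorial)
  rw [k0Coeff, abs_of_nonneg (by have := psiHarm_nonneg n; positivity), sq,
    div_le_div_iff₀ (by positivity) (by positivity)]
  nlinarith [psiHarm_nonneg n, (by positivity : (0 : ℝ) < n.factorial)]

theorem isEntire_k1Coeff : IsEntire k1Coeff := by
  refine .of_abs_le_div_factorial (C := 2) fun n => ?_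
  have h : psiHarm (n + 1) + psiHarm n ≤ 2 * (n + 1).factorial := by
    have h1 := psiHarm_le (n + 1)
    have h2 := psiHarm_le n
    have h3 : ((n + 1 : ℕ) : ℝ) ≤ (n + 1).factorial := by
      exact_mod_cast (n + 1).self_le_factorial
    push_cast at h1 h3
    linarith
  have h0 : 0 ≤ psiHarm (n + 1) + psiHarm n := add_nonneg (psiHarm_nonneg _) (psiHarm_nonneg _)
  rw [k1Coeff, abs_of_nonneg (by positivity), div_le_div_iff₀ (by positivity) (by positivity)]
  nlinarith [psiHarm_nonneg n, (by positivity : (0 : ℝ) < n.factorial)]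

theorem derivCoeff_i0Coeff : derivCoeff i0Coeff = i1Coeff := by
  funext n
  simp only [derivCoeff, i0Coeff, i1Coeff, Nat.factorial_succ]
  push_cast
  field_simp

-- `(z I₁(z))' = z I₀(z)`, written in the variable `y = (z/2)²`.
theorem powSeries_i0Coeff (y : ℝ) :
    powSeries i0Coeff y = powSeries i1Coeff y + y * powSeries (derivCoeff i1Coeff) y := by
  have hcoeff : ∀ n, i0Coeff (n + 1) * y ^ (n + 1) =
      i1Coeff (n + 1) * y ^ (n + 1) + y * (derivCoeff i1Coeff n * y ^ n) := fun n => by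
    simp only [derivCoeff, i0Coeff, i1Coeff, Nat.factorial_succ]
    push_cast
    field_simp
    ring
  rw [powSeries, powSeries, (isEntire_i0Coeff.summable y).tsum_eq_zero_add,
    (isEntire_i1Coeff.summable y).tsum_eq_zero_add, powSeries, ← tsum_mul_left,
    tsum_congr hcoeff, Summable.tsum_add]
  · simp [i0Coeff, i1Coeff]
    ring
  · exact (summable_nat_add_iff 1).mpr (isEntire_i1Coeff.summable y)
  · exact (isEntire_i1Coeff.derivCoeff.summable y).mul_left y

theorem besselI0_eq (z : ℝ) : besselI0 z = powSeries i0Coeff ((z / 2) ^ 2) :=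
  tsum_congr fun n => by rw [← pow_mul, i0Coeff]; ring

theorem besselI1_eq (z : ℝ) : besselI1 z = z / 2 * powSeries i1Coeff ((z / 2) ^ 2) := by
  rw [besselI1, powSeries, ← tsum_mul_left]
  exact tsum_congr fun n => by rw [pow_succ, ← pow_mul, i1Coeff]; ring

theorem besselK0_eq (z : ℝ) :
    besselK0 z = -(Real.log (z / 2) + Real.eulerMascheroniConstant) * besselI0 z +
      powSeries k0Coeff ((z / 2) ^ 2) := by
  rw [besselK0, powSeries, (isEntire_k0Coeff.summable _).tsum_eq_zero_add]
  simp only [k0Coeff, psiHarm, Finset.Icc_eq_empty_of_lt Nat.zero_lt_one, Finset.sum_empty,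
    zero_div, zero_mul, zero_add, ← pow_mul]

theorem besselK1_eq (z : ℝ) :
    besselK1 z = 1 / z + (Real.log (z / 2) + Real.eulerMascheroniConstant) * besselI1 z -
      z / 4 * powSeries k1Coeff ((z / 2) ^ 2) := by
  rw [besselK1, powSeries, ← tsum_mul_left, ← tsum_mul_left]
  congr 1
  exact tsum_congr fun n => by rw [pow_succ, ← pow_mul, k1Coeff]; ring

theorem hasDerivAt_half_sq (z : ℝ) : HasDerivAt (fun w : ℝ => (w / 2) ^ 2) (z / 2) z :=
  (((hasDerivAt_id' z).div_const 2).fun_pow 2).congr_deriv (by ring)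

theorem hasDerivAt_besselI0 (z : ℝ) : HasDerivAt besselI0 (besselI1 z) z := by
  have h := (hasDerivAt_powSeries isEntire_i0Coeff ((z / 2) ^ 2)).comp z (hasDerivAt_half_sq z)
  rw [derivCoeff_i0Coeff] at h
  rw [funext besselI0_eq, besselI1_eq]
  exact h.congr_deriv (mul_comm _ _)

theorem hasDerivAt_besselI1 {z : ℝ} (hz : z ≠ 0) :
    HasDerivAt besselI1 (besselI0 z - besselI1 z / z) z := by
  have h := ((hasDerivAt_id' z).div_const 2).mul
    ((hasDerivAt_powSeries isEntire_i1Coeff ((z / 2) ^ 2)).comp z (hasDerivAt_half_sq z))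
  rw [besselI0_eq, besselI1_eq, funext besselI1_eq, powSeries_i0Coeff]
  refine h.congr_deriv ?_
  simp only [Function.comp_apply]
  field_simp
  ring

theorem sum_Icc_one_eq_sum_range {f : ℕ → ℝ} (h : f 0 = 0) (N : ℕ) :
    ∑ k ∈ Finset.Icc 1 N, f k = ∑ k ∈ Finset.range (N + 1), f k :=
  Finset.sum_subset (fun k hk => by simp only [Finset.mem_Icc, Finset.mem_range] at hk ⊢; omega)
    fun k hk hk' => by
      obtain rfl : k = 0 := by simp only [Finset.mem_Icc, Finset.mem_range] at hk hk'; omega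
      exact h

theorem pow_two_mul_sub_one_mul_self {r : ℝ} {k : ℕ} (hk : 1 ≤ k) :
    r ^ (2 * k - 1) * r = r ^ (2 * k) := by
  rw [← pow_succ, Nat.sub_add_cancel (by omega)]

section Polynomials

variable (γ : ℝ) (a : ℕ → ℕ → ℝ) (n : ℕ) {r : ℝ}

theorem hasDerivAt_vPoly :
    HasDerivAt (vPoly a n) (vTilde γ a n r + γ * wPoly a n r) r := by
  have h := HasDerivAt.fun_sum (u := Finset.range (n / 2 + 1)) fun k _ =>
    (hasDerivAt_pow (2 * k) r).const_mul (a n (2 * k))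
  refine h.congr_deriv ?_
  rw [vTilde, sub_add_cancel, Finset.mul_sum,
    sum_Icc_one_eq_sum_range
      (f := fun k => 2 * ((k : ℝ) * a n (2 * k) * r ^ (2 * k - 1))) (by simp)]
  exact Finset.sum_congr rfl fun k _ => by push_cast; ring

theorem hasDerivAt_wPoly :
    HasDerivAt (wPoly a n)
      (∑ k ∈ Finset.range ((n - 1) / 2 + 1), (2 * k + 1 : ℝ) * a n (2 * k + 1) * r ^ (2 * k))
      r := by
  have h := HasDerivAt.fun_sum (u := Finset.range ((n - 1) / 2 + 1)) fun k _ =>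
    (hasDerivAt_pow (2 * k + 1) r).const_mul (a n (2 * k + 1))
  exact h.congr_deriv (Finset.sum_congr rfl fun k _ => by rw [Nat.add_sub_cancel]; push_cast; ring)

theorem wTilde_eq (hr : r ≠ 0) :
    wTilde γ a n r =
      ∑ k ∈ Finset.range ((n - 1) / 2 + 1), (2 * k + 1 : ℝ) * a n (2 * k + 1) * r ^ (2 * k) -
        wPoly a n r / r - γ * vPoly a n r := by
  rw [wTilde, wPoly, Finset.mul_sum,
    sum_Icc_one_eq_sum_range
      (f := fun k => 2 * ((k : ℝ) * a n (2 * k + 1) * r ^ (2 * k))) (by simp),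
    Finset.sum_div, ← Finset.sum_sub_distrib]
  congr 1
  exact Finset.sum_congr rfl fun k _ => by rw [pow_succ]; field_simp; ring

theorem hasDerivAt_vTilde :
    HasDerivAt (vTilde γ a n) (vBar γ a n r + γ * wTilde γ a n r) r := by
  have h := (HasDerivAt.fun_sum (u := Finset.Icc 1 (n / 2)) fun k _ =>
    (hasDerivAt_pow (2 * k - 1) r).const_mul ((k : ℝ) * a n (2 * k))).const_mul 2 |>.sub
      ((hasDerivAt_wPoly a n).const_mul γ)
  refine h.congr_deriv ?_
  rw [vBar, sub_add_cancel]
  congr 2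
  refine Finset.sum_congr rfl fun k hk => ?_
  have hk : 1 ≤ k := (Finset.mem_Icc.mp hk).1
  rw [Nat.cast_sub (by omega), show 2 * k - 1 - 1 = 2 * k - 2 by omega]
  push_cast
  ring

theorem hasDerivAt_wTilde (hr : r ≠ 0) :
    HasDerivAt (wTilde γ a n)
      (wBar γ a n r / r + wTilde γ a n r / r + γ * vTilde γ a n r) r := by
  have h := (HasDerivAt.fun_sum (u := Finset.Icc 1 ((n - 1) / 2)) fun k _ =>
    (hasDerivAt_pow (2 * k) r).const_mul ((k : ℝ) * a n (2 * k + 1))).const_mul 2 |>.sub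
      ((hasDerivAt_vPoly γ a n).const_mul γ)
  refine h.congr_deriv ?_
  have hv : (vTilde γ a n r + γ * wPoly a n r) * r =
      2 * ∑ k ∈ Finset.Icc 1 (n / 2), (k : ℝ) * a n (2 * k) * r ^ (2 * k) := by
    rw [vTilde, sub_add_cancel, mul_assoc, Finset.sum_mul]
    congr 1
    refine Finset.sum_congr rfl fun k hk => ?_
    rw [mul_assoc, pow_two_mul_sub_one_mul_self (Finset.mem_Icc.mp hk).1]
  have hw : wBar γ a n r / r + wTilde γ a n r / r + γ * vTilde γ a n r =
      (4 * ∑ k ∈ Finset.Icc 1 ((n - 1) / 2), (k : ℝ) ^ 2 * a n (2 * k + 1) * r ^ (2 * k) -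
        2 * γ * ∑ k ∈ Finset.Icc 1 (n / 2), (k : ℝ) * a n (2 * k) * r ^ (2 * k)) / r := by
    rw [wBar]
    field_simp
    ring
  have hw' : (∑ k ∈ Finset.Icc 1 ((n - 1) / 2),
      (k : ℝ) * a n (2 * k + 1) * ((2 * k : ℕ) * r ^ (2 * k - 1))) * r =
        2 * ∑ k ∈ Finset.Icc 1 ((n - 1) / 2),
          (k : ℝ) ^ 2 * a n (2 * k + 1) * r ^ (2 * k) := by
    rw [Finset.sum_mul, Finset.mul_sum]
    refine Finset.sum_congr rfl fun k hk => ?_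
    rw [← pow_two_mul_sub_one_mul_self (r := r) (Finset.mem_Icc.mp hk).1]
    push_cast
    ring
  rw [hw, eq_div_iff hr]
  linear_combination 2 * hw' - γ * hv

end Polynomials

section LogPart

variable {γ r : ℝ}

theorem hasDerivAt_besselI_comb (hγ : γ ≠ 0) (hr : r ≠ 0) {p q : ℝ → ℝ} {p' q' : ℝ}
    (hp : HasDerivAt p p' r) (hq : HasDerivAt q q' r) :
    HasDerivAt (fun s => besselI0 (γ * s) * p s - besselI1 (γ * s) * q s)
      (besselI0 (γ * r) * (p' - γ * q r) - besselI1 (γ * r) * (q' - q r / r - γ * p r)) r := by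
  have hlin : HasDerivAt (fun s => γ * s) γ r := by simpa using (hasDerivAt_id r).const_mul γ
  have h0 := ((hasDerivAt_besselI0 (γ * r)).comp r hlin).mul hp
  have h1 := ((hasDerivAt_besselI1 (mul_ne_zero hγ hr)).comp r hlin).mul hq
  refine (h0.sub h1).congr_deriv ?_
  simp only [Function.comp_apply]
  field_simp
  ring

variable (a : ℕ → ℕ → ℝ) (n : ℕ)

theorem hasDerivAt_besselI_vPoly_sub (hγ : γ ≠ 0) (hr : r ≠ 0) :
    HasDerivAt (fun s => besselI0 (γ * s) * vPoly a n s - besselI1 (γ * s) * wPoly a n s)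
      (besselI0 (γ * r) * vTilde γ a n r - besselI1 (γ * r) * wTilde γ a n r) r := by
  refine (hasDerivAt_besselI_comb hγ hr (hasDerivAt_vPoly γ a n)
    (hasDerivAt_wPoly a n)).congr_deriv ?_
  rw [wTilde_eq γ a n hr]
  ring

theorem hasDerivAt_besselI_vTilde_sub (hγ : γ ≠ 0) (hr : r ≠ 0) :
    HasDerivAt (fun s => besselI0 (γ * s) * vTilde γ a n s - besselI1 (γ * s) * wTilde γ a n s)
      (besselI0 (γ * r) * vBar γ a n r - besselI1 (γ * r) / r * wBar γ a n r) r := by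
  refine (hasDerivAt_besselI_comb hγ hr (hasDerivAt_vTilde γ a n)
    (hasDerivAt_wTilde γ a n hr)).congr_deriv ?_
  ring

theorem deriv_deriv_besselI_vPoly_sub (hγ : γ ≠ 0) (hr : r ≠ 0) :
    deriv (deriv fun s => besselI0 (γ * s) * vPoly a n s - besselI1 (γ * s) * wPoly a n s) r =
      besselI0 (γ * r) * vBar γ a n r - besselI1 (γ * r) / r * wBar γ a n r := by
  have hderiv : (deriv fun s => besselI0 (γ * s) * vPoly a n s - besselI1 (γ * s) * wPoly a n s)
      =ᶠ[𝓝 r]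
        fun s => besselI0 (γ * s) * vTilde γ a n s - besselI1 (γ * s) * wTilde γ a n s := by
    filter_upwards [isOpen_ne.mem_nhds hr] with s hs
    exact (hasDerivAt_besselI_vPoly_sub a n hγ hs).deriv
  rw [hderiv.deriv_eq, (hasDerivAt_besselI_vTilde_sub a n hγ hr).deriv]

end LogPart

theorem half_mul_sq (γ r : ℝ) : (γ * r / 2) ^ 2 = γ ^ 2 / 4 * r ^ 2 := by ring

section SquareVariable

variable (γ : ℝ) (a : ℕ → ℕ → ℝ) (n : ℕ)

-- `F`, `(F - 1)/x` and `H` of the header.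
noncomputable def logFactor (x : ℝ) : ℝ :=
  powSeries i0Coeff (γ ^ 2 / 4 * x) * powSeries (fun k => a n (2 * k)) x -
    γ / 2 * x * powSeries i1Coeff (γ ^ 2 / 4 * x) * powSeries (fun k => a n (2 * k + 1)) x

noncomputable def logFactorQuot (x : ℝ) : ℝ :=
  γ ^ 2 / 4 * powSeries (fun k => i0Coeff (k + 1)) (γ ^ 2 / 4 * x) *
      powSeries (fun k => a n (2 * k)) x +
    powSeries (fun k => a n (2 * (k + 1))) x -
    γ / 2 * powSeries i1Coeff (γ ^ 2 / 4 * x) * powSeries (fun k => a n (2 * k + 1)) x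

noncomputable def regFactor (x : ℝ) : ℝ :=
  powSeries k0Coeff (γ ^ 2 / 4 * x) * powSeries (fun k => a n (2 * k)) x -
    γ / 4 * x * powSeries k1Coeff (γ ^ 2 / 4 * x) * powSeries (fun k => a n (2 * k + 1)) x +
    powSeries (fun k => a n (2 * k + 1)) x / γ

variable {a n}

theorem isEntire_evenCoeff (hz : ∀ k, n < k → a n k = 0) : IsEntire fun k => a n (2 * k) :=
  .of_forall_lt_eq_zero (N := n) fun k hk => hz _ (by omega)

theorem isEntire_oddCoeff (hz : ∀ k, n < k → a n k = 0) : IsEntire fun k => a n (2 * k + 1) :=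
  .of_forall_lt_eq_zero (N := n) fun k hk => hz _ (by omega)

theorem vPoly_eq (hz : ∀ k, n < k → a n k = 0) (r : ℝ) :
    vPoly a n r = powSeries (fun k => a n (2 * k)) (r ^ 2) := by
  rw [powSeries, tsum_eq_sum (s := Finset.range (n / 2 + 1)) fun k hk => by
    rw [hz _ (by simp at hk; omega), zero_mul]]
  exact Finset.sum_congr rfl fun k _ => by rw [pow_mul]

theorem wPoly_eq (hz : ∀ k, n < k → a n k = 0) (r : ℝ) :
    wPoly a n r = r * powSeries (fun k => a n (2 * k + 1)) (r ^ 2) := by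
  rw [powSeries, tsum_eq_sum (s := Finset.range ((n - 1) / 2 + 1)) fun k hk => by
    rw [hz _ (by simp at hk; omega), zero_mul], Finset.mul_sum]
  exact Finset.sum_congr rfl fun k _ => by rw [pow_succ, pow_mul]; ring

theorem besselI_vPoly_sub_eq (hz : ∀ k, n < k → a n k = 0) (r : ℝ) :
    besselI0 (γ * r) * vPoly a n r - besselI1 (γ * r) * wPoly a n r =
      logFactor γ a n (r ^ 2) := by
  rw [besselI0_eq, besselI1_eq, vPoly_eq hz, wPoly_eq hz, logFactor, half_mul_sq]
  ring

theorem PhiFund_eq (hz : ∀ k, n < k → a n k = 0) (hγ : γ ≠ 0) {r : ℝ} (hr : r ≠ 0) :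
    PhiFund γ a n r =
      -(Real.log r + (Real.log (γ / 2) + Real.eulerMascheroniConstant)) *
          logFactor γ a n (r ^ 2) + regFactor γ a n (r ^ 2) := by
  have hlog : Real.log (γ * r / 2) = Real.log r + Real.log (γ / 2) := by
    rw [mul_div_right_comm, Real.log_mul (div_ne_zero hγ two_ne_zero) hr, add_comm]
  rw [← besselI_vPoly_sub_eq γ hz, PhiFund, besselK0_eq, besselK1_eq, hlog, regFactor,
    vPoly_eq hz, wPoly_eq hz, besselI0_eq, besselI1_eq, half_mul_sq]
  field_simp
  ring

theorem logFactor_eq (hz : ∀ k, n < k → a n k = 0) (ha0 : a n 0 = 1) (x : ℝ) :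
    logFactor γ a n x = 1 + x * logFactorQuot γ a n x := by
  rw [logFactor, logFactorQuot, powSeries_eq_add_mul isEntire_i0Coeff,
    powSeries_eq_add_mul (isEntire_evenCoeff hz) x]
  simp only [i0Coeff, Nat.factorial_zero, Nat.cast_one, one_pow, div_one, mul_zero, ha0]
  ring

theorem contDiff_logFactor (hz : ∀ k, n < k → a n k = 0) :
    ContDiff ℝ ∞ (logFactor γ a n) := by
  have := contDiff_powSeries isEntire_i0Coeff
  have := contDiff_powSeries isEntire_i1Coeff
  have := contDiff_powSeries (isEntire_evenCoeff hz)
  have := contDiff_powSeries (isEntire_oddCoeff hz)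
  unfold logFactor
  fun_prop

theorem contDiff_logFactorQuot (hz : ∀ k, n < k → a n k = 0) :
    ContDiff ℝ ∞ (logFactorQuot γ a n) := by
  have := contDiff_powSeries isEntire_i0Coeff.comp_succ
  have := contDiff_powSeries isEntire_i1Coeff
  have := contDiff_powSeries (isEntire_evenCoeff hz)
  have := contDiff_powSeries (isEntire_evenCoeff hz).comp_succ
  have := contDiff_powSeries (isEntire_oddCoeff hz)
  unfold logFactorQuot
  fun_prop

theorem contDiff_regFactor (hz : ∀ k, n < k → a n k = 0) :
    ContDiff ℝ ∞ (regFactor γ a n) := by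
  have := contDiff_powSeries isEntire_k0Coeff
  have := contDiff_powSeries isEntire_k1Coeff
  have := contDiff_powSeries (isEntire_evenCoeff hz)
  have := contDiff_powSeries (isEntire_oddCoeff hz)
  unfold regFactor
  fun_prop

theorem logFactorQuot_zero (ha0 : a n 0 = 1) :
    logFactorQuot γ a n 0 = γ ^ 2 / 4 + a n 2 - γ / 2 * a n 1 := by
  simp [logFactorQuot, i0Coeff, i1Coeff, ha0]

theorem deriv_logFactor_zero (hz : ∀ k, n < k → a n k = 0) (ha0 : a n 0 = 1) :
    deriv (logFactor γ a n) 0 = logFactorQuot γ a n 0 := by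
  have hQ := ((contDiff_logFactorQuot γ hz).differentiable (by simp) 0).hasDerivAt
  have h : HasDerivAt (logFactor γ a n) _ 0 :=
    funext (logFactor_eq γ hz ha0) ▸ ((hasDerivAt_id' 0).mul hQ).const_add 1
  simpa using h.deriv

theorem deriv_regFactor_zero (hz : ∀ k, n < k → a n k = 0) (ha0 : a n 0 = 1) :
    deriv (regFactor γ a n) 0 = γ ^ 2 / 4 - γ / 4 * a n 1 + a n 3 / γ := by
  have hK0 := hasDerivAt_powSeries_comp_mul isEntire_k0Coeff (γ ^ 2 / 4) 0
  have hK1 := hasDerivAt_powSeries_comp_mul isEntire_k1Coeff (γ ^ 2 / 4) 0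
  have hV := hasDerivAt_powSeries (isEntire_evenCoeff hz) 0
  have hW := hasDerivAt_powSeries (isEntire_oddCoeff hz) 0
  have h : HasDerivAt (regFactor γ a n) _ 0 :=
    ((hK0.mul hV).sub ((((hasDerivAt_id' 0).const_mul (γ / 4)).mul hK1).mul hW)).add
      (hW.div_const γ)
  rw [h.deriv]
  simp [k0Coeff, k1Coeff, derivCoeff, psiHarm, ha0]

end SquareVariable

section Calculus

variable {g : ℝ → ℝ} {r : ℝ}

theorem hasDerivAt_comp_sq (hg : DifferentiableAt ℝ g (r ^ 2)) :
    HasDerivAt (fun s => g (s ^ 2)) (2 * r * deriv g (r ^ 2)) r := by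
  have h := HasDerivAt.comp (h := fun s => s ^ 2) r hg.hasDerivAt (hasDerivAt_pow 2 r)
  exact h.congr_deriv (by simp only [Nat.cast_ofNat]; ring)

theorem deriv_comp_sq (hg : Differentiable ℝ g) :
    deriv (fun s => g (s ^ 2)) = fun r => 2 * r * deriv g (r ^ 2) :=
  funext fun _ => (hasDerivAt_comp_sq (hg _)).deriv

theorem deriv_deriv_comp_sq (hg : ContDiff ℝ 2 g) :
    deriv (deriv fun s => g (s ^ 2)) r =
      2 * deriv g (r ^ 2) + 4 * r ^ 2 * deriv (deriv g) (r ^ 2) := by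
  rw [deriv_comp_sq (hg.differentiable (by simp))]
  refine ((((hasDerivAt_id' r).const_mul 2).mul
    (hasDerivAt_comp_sq (hg.differentiable_deriv_two _))).deriv).trans ?_
  ring

theorem deriv_deriv_log_mul_add {F H Φ : ℝ → ℝ} {c : ℝ}
    (hF : ContDiff ℝ 2 F) (hH : ContDiff ℝ 2 H)
    (hΦ : ∀ s, 0 < s → Φ s = -(Real.log s + c) * F s + H s) (hr : 0 < r) :
    deriv (deriv Φ) r = F r / r ^ 2 - 2 * deriv F r / r -
      (Real.log r + c) * deriv (deriv F) r + deriv (deriv H) r := by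
  have hF1 := hF.differentiable (by simp)
  have hF2 := hF.differentiable_deriv_two
  have hH2 := hH.differentiable_deriv_two
  have hΦ' : deriv Φ =ᶠ[𝓝 r]
      fun s => -(F s / s) - (Real.log s + c) * deriv F s + deriv H s := by
    filter_upwards [isOpen_Ioi.mem_nhds hr] with s hs
    have hΦs : Φ =ᶠ[𝓝 s] fun t => -(Real.log t + c) * F t + H t := by
      filter_upwards [isOpen_Ioi.mem_nhds hs] with t ht using hΦ t ht
    rw [hΦs.deriv_eq]
    refine ((((Real.hasDerivAt_log hs.ne').add_const c).neg.mul (hF1 s).hasDerivAt).add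
      (hH.differentiable (by simp) s).hasDerivAt).deriv.trans ?_
    simp only [Pi.neg_apply]
    field_simp
    ring
  rw [hΦ'.deriv_eq]
  refine (((((hF1 r).hasDerivAt.div (hasDerivAt_id' r) hr.ne').neg.sub
    (((Real.hasDerivAt_log hr.ne').add_const c).mul (hF2 r).hasDerivAt)).add
      (hH2 r).hasDerivAt).deriv).trans ?_
  field_simp
  ring

theorem exists_abs_comp_sq_sub_le (hg : DifferentiableAt ℝ g 0) :
    ∃ δ : ℝ, 0 < δ ∧ ∃ C : ℝ, 0 ≤ C ∧
      ∀ r : ℝ, 0 < r → r < δ → |g (r ^ 2) - g 0| ≤ C * r ^ 2 := by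
  obtain ⟨C, hC⟩ := hg.isBigO_sub.bound
  obtain ⟨ε, hε, hball⟩ := Metric.eventually_nhds_iff.mp hC
  refine ⟨Real.sqrt ε, Real.sqrt_pos.mpr hε, max C 0, le_max_right _ _, fun r hr hrε => ?_⟩
  have hr2 : dist (r ^ 2) 0 < ε := by
    rw [Real.dist_0_eq_abs, abs_of_pos (by positivity)]
    exact (Real.lt_sqrt hr.le).mp hrε
  have h := hball hr2
  simp only [Real.norm_eq_abs, sub_zero, abs_of_pos (pow_pos hr 2)] at h
  exact h.trans (mul_le_mul_of_nonneg_right (le_max_left _ _) (by positivity))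

end Calculus

-- `Θ` of the header.
noncomputable def phiDeriv2Regular (γ : ℝ) (a : ℕ → ℕ → ℝ) (n : ℕ) (x : ℝ) : ℝ :=
  logFactorQuot γ a n x - 4 * deriv (logFactor γ a n) x -
    (Real.log (γ / 2) + Real.eulerMascheroniConstant) *
      (2 * deriv (logFactor γ a n) x + 4 * x * deriv (deriv (logFactor γ a n)) x) +
    2 * deriv (regFactor γ a n) x + 4 * x * deriv (deriv (regFactor γ a n)) x

section Regular

variable {γ : ℝ} {a : ℕ → ℕ → ℝ} {n : ℕ}

theorem deriv_deriv_PhiFund_sub (hz : ∀ k, n < k → a n k = 0) (ha0 : a n 0 = 1) (hγ : γ ≠ 0)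
    {r : ℝ} (hr : 0 < r) :
    deriv (deriv (PhiFund γ a n)) r - 1 / r ^ 2 -
        Real.log (1 / r) *
          (besselI0 (γ * r) * vBar γ a n r - besselI1 (γ * r) / r * wBar γ a n r) =
      phiDeriv2Regular γ a n (r ^ 2) := by
  have hF := contDiff_logFactor γ hz
  have hH := contDiff_regFactor γ hz
  have hF2 : ContDiff ℝ ∞ fun s => logFactor γ a n (s ^ 2) := by fun_prop
  have hH2 : ContDiff ℝ ∞ fun s => regFactor γ a n (s ^ 2) := by fun_prop
  have hlog : deriv (deriv fun s => logFactor γ a n (s ^ 2)) r =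
      besselI0 (γ * r) * vBar γ a n r - besselI1 (γ * r) / r * wBar γ a n r := by
    rw [← deriv_deriv_besselI_vPoly_sub a n hγ hr.ne', funext (besselI_vPoly_sub_eq γ hz)]
  rw [deriv_deriv_log_mul_add (hF2.of_le ENat.LEInfty.out) (hH2.of_le ENat.LEInfty.out)
      (fun s hs => PhiFund_eq γ hz hγ hs.ne') hr, ← hlog,
    deriv_deriv_comp_sq (hF.of_le ENat.LEInfty.out),
    deriv_deriv_comp_sq (hH.of_le ENat.LEInfty.out),
    deriv_comp_sq (hF.differentiable (by simp)), logFactor_eq γ hz ha0, one_div r, Real.log_inv,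
    phiDeriv2Regular]
  field_simp
  ring

theorem phiDeriv2Regular_zero (hz : ∀ k, n < k → a n k = 0) (ha0 : a n 0 = 1) :
    phiDeriv2Regular γ a n 0 =
      (Real.log (2 / γ) - Real.eulerMascheroniConstant) * (γ ^ 2 / 2 - γ * a n 1 + 2 * a n 2) -
        γ ^ 2 / 4 + γ * a n 1 - 3 * a n 2 + 2 * a n 3 / γ := by
  have hlog : Real.log (γ / 2) = -Real.log (2 / γ) := by rw [← Real.log_inv, inv_div]
  rw [phiDeriv2Regular, deriv_logFactor_zero γ hz ha0, deriv_regFactor_zero γ hz ha0,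
    logFactorQuot_zero γ ha0, hlog]
  ring

theorem differentiable_phiDeriv2Regular (hz : ∀ k, n < k → a n k = 0) :
    Differentiable ℝ (phiDeriv2Regular γ a n) := by
  have hF := contDiff_logFactor γ hz
  have hQ := contDiff_logFactorQuot γ hz
  have hH := contDiff_regFactor γ hz
  have : ContDiff ℝ ∞ (phiDeriv2Regular γ a n) := by
    unfold phiDeriv2Regular
    fun_prop
  exact this.differentiable (by simp)

end Regular

theorem stmt_17_general
    (κ c : ℝ) (hκ : 0 < κ) (hc : 0 < c) (a : ℕ → ℕ → ℝ)
    (ha0 : ∀ n : ℕ, a n 0 = 1)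
    (hzero : ∀ n k : ℕ, n < k → a n k = 0)
    (n : ℕ) :
    ∃ δ : ℝ, 0 < δ ∧ ∃ c₀ : ℝ, 0 ≤ c₀ ∧ ∀ r : ℝ, 0 < r → r < δ →
      |deriv (deriv (PhiFund (gammaC κ c) a n)) r - 1 / r ^ 2 -
          Real.log (1 / r) *
            (besselI0 (gammaC κ c * r) * vBar (gammaC κ c) a n r -
              besselI1 (gammaC κ c * r) / r * wBar (gammaC κ c) a n r) -
          ((Real.log (2 / gammaC κ c) - Real.eulerMascheroniConstant) *
              (gammaC κ c ^ 2 / 2 - gammaC κ c * a n 1 + 2 * a n 2) -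
            gammaC κ c ^ 2 / 4 + gammaC κ c * a n 1 - 3 * a n 2 +
            2 * a n 3 / gammaC κ c)| ≤ c₀ * r ^ 2 := by
  have hγ : gammaC κ c ≠ 0 := (div_pos hκ hc).ne'
  obtain ⟨δ, hδ, C, hC, hbound⟩ :=
    exists_abs_comp_sq_sub_le (differentiable_phiDeriv2Regular (γ := gammaC κ c) (hzero n) 0)
  refine ⟨δ, hδ, C, hC, fun r hr hrδ => ?_⟩
  rw [← phiDeriv2Regular_zero (hzero n) (ha0 n), deriv_deriv_PhiFund_sub (hzero n) (ha0 n) hγ hr]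
  exact hbound r hr hrδ

/-- As `r → 0⁺`,
`Φ_n″(r) − 1/r² − ln(1/r)[I₀(γr) v̄_n(r) − (I₁(γr)/r) w̄_n(r)] − ω_n = O(r²)`, with
`ω_n = (ln(2/γ) − C)(γ²/2 − γ a_{n,1} + 2a_{n,2}) − γ²/4 + γ a_{n,1} − 3a_{n,2} + 2a_{n,3}/γ`:
there are `δ > 0` and `c₀ ≥ 0` bounding the left-hand side by `c₀ r²` for `0 < r < δ`. -/
theorem stmt_17
    (κ c : ℝ) (hκ : 0 < κ) (hc : 0 < c) (a : ℕ → ℕ → ℝ)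
    (ha0 : ∀ n : ℕ, a n 0 = 1)
    (hann : ∀ n : ℕ, 1 ≤ n →
      a n n = -(betaC κ c 1 * a (n - 1) (n - 1)) / (2 * gammaC κ c * n))
    (hrec : ∀ n k : ℕ, 1 ≤ k → k ≤ n - 1 →
      a n k = (1 / (2 * gammaC κ c * k)) *
        (4 * (((k + 1) / 2 : ℕ) : ℝ) ^ 2 * a n (k + 1) -
          ∑ m ∈ Finset.Icc (k - 1) (n - 1), betaC κ c (n - m) * a m (k - 1)))
    (hzero : ∀ n k : ℕ, n < k → a n k = 0)
    (n : ℕ) :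
    ∃ δ : ℝ, 0 < δ ∧ ∃ c₀ : ℝ, 0 ≤ c₀ ∧ ∀ r : ℝ, 0 < r → r < δ →
      |deriv (deriv (PhiFund (gammaC κ c) a n)) r - 1 / r ^ 2 -
          Real.log (1 / r) *
            (besselI0 (gammaC κ c * r) * vBar (gammaC κ c) a n r -
              besselI1 (gammaC κ c * r) / r * wBar (gammaC κ c) a n r) -
          ((Real.log (2 / gammaC κ c) - Real.eulerMascheroniConstant) *
              (gammaC κ c ^ 2 / 2 - gammaC κ c * a n 1 + 2 * a n 2) -
            gammaC κ c ^ 2 / 4 + gammaC κ c * a n 1 - 3 * a n 2 +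
            2 * a n 3 / gammaC κ c)| ≤ c₀ * r ^ 2 :=
  stmt_17_general κ c hκ hc a ha0 hzero n
end

section
/- Let x : ℝ → ℝ² be a three times continuously differentiable, 2π-periodic parametrization with |x′(s)| > 0 for all s. Then for every s ∈ ℝ, the quotient r(s,σ)² / (4 sin²((s − σ)/2)), which is well defined for σ ≠ s with σ sufficiently close to s, tends to |x′(s)|² as σ → s with σ ≠ s; consequently ln(r(s,σ)) − ln(2 |sin((s − σ)/2)|) tends to ln |x′(s)| as σ → s with σ ≠ s. -/
open Real Filter
open Topology

/-- For a `C³`, `2π`-periodic regular parametrization `x : ℝ → ℝ²`,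
the quotient `r(s,σ)² / (4 sin²((s−σ)/2))` tends to `|x′(s)|²` as `σ → s`, `σ ≠ s`;
consequently `ln r(s,σ) − ln(2|sin((s−σ)/2)|)` tends to `ln |x′(s)|`. -/
theorem stmt_19 (x : ℝ → EuclideanSpace ℝ (Fin 2))
    (hx : ContDiff ℝ 3 x)
    (hper : Function.Periodic x (2 * Real.pi))
    (hreg : ∀ s : ℝ, ‖deriv x s‖ > 0) (s : ℝ) :
    Tendsto (fun σ : ℝ => ‖x s - x σ‖ ^ 2 / (4 * Real.sin ((s - σ) / 2) ^ 2))
        (nhdsWithin s {s}ᶜ) (nhds (‖deriv x s‖ ^ 2)) ∧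
      Tendsto (fun σ : ℝ => Real.log ‖x s - x σ‖ - Real.log (2 * |Real.sin ((s - σ) / 2)|))
        (nhdsWithin s {s}ᶜ) (nhds (Real.log ‖deriv x s‖)) := by
  have hd : HasDerivAt x (deriv x s) s :=
    ((hx.differentiable (by norm_num)).differentiableAt).hasDerivAt
  have hslope := hasDerivAt_iff_tendsto_slope.mp hd
  -- f : difference quotient norm
  have hf : Tendsto (fun σ => ‖x s - x σ‖ / |σ - s|) (𝓝[≠] s) (𝓝 ‖deriv x s‖) := by
    have h1 := hslope.norm
    refine h1.congr fun σ => ?_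
    rw [slope_def_module, norm_smul, norm_inv, Real.norm_eq_abs, norm_sub_rev,
      inv_mul_eq_div]
  -- g : sin quotient
  have hsin : Tendsto (fun t : ℝ => Real.sin t / t) (𝓝[≠] (0:ℝ)) (𝓝 1) := by
    have h0 : HasDerivAt Real.sin 1 0 := by simpa using Real.hasDerivAt_sin 0
    have h1 := hasDerivAt_iff_tendsto_slope.mp h0
    refine h1.congr fun t => ?_
    rw [slope_def_module]
    simp [div_eq_inv_mul]
  have hphi : Tendsto (fun σ : ℝ => (s - σ) / 2) (𝓝[≠] s) (𝓝[≠] (0:ℝ)) := by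
    apply Tendsto.inf
    · have : Continuous (fun σ : ℝ => (s - σ) / 2) := by continuity
      have := this.tendsto s
      simpa using this
    · refine tendsto_principal_principal.2 fun σ hσ => ?_
      simp only [Set.mem_compl_iff, Set.mem_singleton_iff] at *
      intro h
      apply hσ
      have : s - σ = 0 := by linarith [(div_eq_zero_iff.mp h)]
      linarith
  have hg : Tendsto (fun σ : ℝ => 2 * |Real.sin ((s - σ) / 2)| / |σ - s|) (𝓝[≠] s) (𝓝 1) := by
    have h1 := (hsin.comp hphi).abs
    rw [abs_one] at h1
    refine h1.congr' ?_
    filter_upwards [self_mem_nhdsWithin] with σ hσ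
    have hne : s - σ ≠ 0 := by
      simp only [Set.mem_compl_iff, Set.mem_singleton_iff] at hσ
      intro h; apply hσ; linarith [sub_eq_zero.mp h]
    have habs : |s - σ| ≠ 0 := abs_ne_zero.mpr hne
    simp only [Function.comp_apply, abs_div, abs_two]
    rw [abs_sub_comm σ s]
    field_simp
  -- h : the main quotient
  have hh : Tendsto (fun σ : ℝ => ‖x s - x σ‖ / (2 * |Real.sin ((s - σ) / 2)|)) (𝓝[≠] s)
      (𝓝 ‖deriv x s‖) := by
    have := hf.div hg one_ne_zero
    rw [div_one] at this
    refine this.congr' ?_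
    filter_upwards [self_mem_nhdsWithin] with σ hσ
    have hc : |σ - s| ≠ 0 := by
      simp only [Set.mem_compl_iff, Set.mem_singleton_iff] at hσ
      simp [sub_eq_zero, hσ]
    simp only [Pi.div_apply]
    rcases eq_or_ne (2 * |Real.sin ((s - σ) / 2)|) 0 with hb | hb
    · rw [hb, zero_div, div_zero, div_zero]
    · field_simp
  constructor
  · have := hh.pow 2
    refine this.congr fun σ => ?_
    rw [div_pow, mul_pow, sq_abs]
    norm_num
  · have hpos : ∀ᶠ σ in 𝓝[≠] s, 0 < ‖x s - x σ‖ / (2 * |Real.sin ((s - σ) / 2)|) :=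
      hh.eventually (eventually_gt_nhds (hreg s))
    have hlog := (Real.continuousAt_log (ne_of_gt (hreg s))).tendsto.comp hh
    refine hlog.congr' ?_
    filter_upwards [hpos] with σ hσ
    have hb : 2 * |Real.sin ((s - σ) / 2)| ≠ 0 := by
      intro h; rw [h, div_zero] at hσ; exact lt_irrefl 0 hσ
    have ha : ‖x s - x σ‖ ≠ 0 := by
      intro h; rw [h, zero_div] at hσ; exact lt_irrefl 0 hσ
    simp only [Function.comp_apply]
    rw [Real.log_div ha hb]
end
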